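/- arXiv:2603.25948 — 8 statements merged into one kernel-verified Lean document; each statement's English description precedes it below -/
import Mathlib

section
/- Let $P \subseteq \mathbb{R}^n$ be a compact convex set with $p_0 \in P$, let $p \mapsto f(p)$ be strictly concave and upper semicontinuous on $P$, and let $p \mapsto d(p)$ be convex and lower semicontinuous with $d(p_0) = 0$. Define $v(\gamma) = \max\{f(p) : p \in P,\ d(p) \le \gamma\}$. Then $v$ is concave on $[0,\infty)$, and $v$ is strictly concave on any interval where it is strictly increasing. -/
/-- For `P ⊆ ℝⁿ` compact convex containing `p₀`, `f` strictly concave and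
upper semicontinuous on `P`, `d` convex and lower semicontinuous with `d p₀ = 0`, the
value `v γ = max {f p : p ∈ P, d p ≤ γ}` is concave on `[0,∞)` and strictly concave on
any interval where it is strictly increasing. -/
theorem stmt2 {n : ℕ} (P : Set (Fin n → ℝ)) (hPc : IsCompact P) (hPconv : Convex ℝ P)
    (p₀ : Fin n → ℝ) (hp₀ : p₀ ∈ P)
    (f : (Fin n → ℝ) → ℝ) (hf : StrictConcaveOn ℝ P f) (hfu : UpperSemicontinuousOn f P)
    (d : (Fin n → ℝ) → ℝ) (hd : ConvexOn ℝ P d) (hdl : LowerSemicontinuousOn d P)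
    (hd0 : d p₀ = 0)
    (v : ℝ → ℝ)
    (hv : ∀ γ : ℝ, 0 ≤ γ → IsGreatest {w | ∃ p ∈ P, d p ≤ γ ∧ w = f p} (v γ)) :
    ConcaveOn ℝ (Set.Ici 0) v ∧
      ∀ a b : ℝ, 0 ≤ a → a ≤ b → StrictMonoOn v (Set.Icc a b) →
        StrictConcaveOn ℝ (Set.Icc a b) v := by

  constructor
  · refine ⟨convex_Ici 0, ?_⟩
    intro x hx y hy s t hs ht hst
    simp only [Set.mem_Ici] at hx hy
    obtain ⟨p₁, hp₁P, hd₁, hv₁⟩ := (hv x hx).1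
    obtain ⟨p₂, hp₂P, hd₂, hv₂⟩ := (hv y hy).1
    have hγ : (0:ℝ) ≤ s * x + t * y :=
      add_nonneg (mul_nonneg hs hx) (mul_nonneg ht hy)
    have hmem : s • p₁ + t • p₂ ∈ P := hPconv hp₁P hp₂P hs ht hst
    have hdm0 := hd.2 hp₁P hp₂P hs ht hst
    simp only [smul_eq_mul] at hdm0
    have hdm : d (s • p₁ + t • p₂) ≤ s * x + t * y := by
      have h1 : s * d p₁ ≤ s * x := mul_le_mul_of_nonneg_left hd₁ hs
      have h2 : t * d p₂ ≤ t * y := mul_le_mul_of_nonneg_left hd₂ ht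
      linarith
    have hfm := hf.concaveOn.2 hp₁P hp₂P hs ht hst
    simp only [smul_eq_mul] at hfm ⊢
    have hub := (hv _ hγ).2 ⟨_, hmem, hdm, rfl⟩
    rw [hv₁, hv₂]
    linarith
  · intro a b ha hab hmono
    refine ⟨convex_Icc a b, ?_⟩
    intro x hx y hy hxy s t hs ht hst
    have hx0 : (0:ℝ) ≤ x := le_trans ha hx.1
    have hy0 : (0:ℝ) ≤ y := le_trans ha hy.1
    obtain ⟨p₁, hp₁P, hd₁, hv₁⟩ := (hv x hx0).1
    obtain ⟨p₂, hp₂P, hd₂, hv₂⟩ := (hv y hy0).1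
    have hγ : (0:ℝ) ≤ s * x + t * y :=
      add_nonneg (mul_nonneg hs.le hx0) (mul_nonneg ht.le hy0)
    have hmem : s • p₁ + t • p₂ ∈ P := hPconv hp₁P hp₂P hs.le ht.le hst
    have hdm0 := hd.2 hp₁P hp₂P hs.le ht.le hst
    simp only [smul_eq_mul] at hdm0
    have hdm : d (s • p₁ + t • p₂) ≤ s * x + t * y := by
      have h1 : s * d p₁ ≤ s * x := mul_le_mul_of_nonneg_left hd₁ hs.le
      have h2 : t * d p₂ ≤ t * y := mul_le_mul_of_nonneg_left hd₂ ht.le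
      linarith
    have hub := (hv _ hγ).2 ⟨_, hmem, hdm, rfl⟩
    by_cases hp : p₁ = p₂
    · exfalso
      have hvxy : v x = v y := by rw [hv₁, hv₂, hp]
      rcases hxy.lt_or_gt with h | h
      · exact absurd hvxy (hmono hx hy h).ne
      · exact absurd hvxy.symm (hmono hy hx h).ne
    · have hfm := hf.2 hp₁P hp₂P hp hs ht hst
      simp only [smul_eq_mul] at hfm ⊢
      rw [hv₁, hv₂]
      linarith
end

section
/- Let $X$ be a set, $\Gamma$ an interval, and for each $x \in X$ let $\gamma \mapsto v(x,\gamma)$ be nondecreasing on $\Gamma$. Let $v^\star(\gamma) = \inf_{x\in X} v(x,\gamma)$ and suppose for each $\gamma_j$ in a finite grid $\gamma_1 \le \cdots \le \gamma_{T+1}$ covering $\Gamma$, the infimum is attained by some $x_j$, and $\gamma' \mapsto v(x_j,\gamma')$ is $L$-Lipschitz. Let $\phi : \Gamma \to \mathbb{R}_+$ be $L'$-Lipschitz, and suppose $(x^\Delta, \alpha^\Delta)$ with $\alpha^\Delta \ge 0$ satisfies $v(x^\Delta, \gamma_t) - v^\star(\gamma_t) \le \alpha^\Delta\phi(\gamma_t)$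 for all grid points $t$. Then for every $\gamma \in \Gamma$, $v(x^\Delta,\gamma) - v^\star(\gamma) \le \alpha^\Delta\phi(\gamma) + \Delta(L + \alpha^\Delta L')$, where $\Delta = \max_t(\gamma_{t+1}-\gamma_t)$. -/
/-- Discretization error bound. If the discretized GARO constraints hold at
grid points `g 0 ≤ ⋯ ≤ g T` covering `Γ = [g 0, g T]`, with `v` nondecreasing in `γ`,
robust optimizers `xj t` at grid points with `L`-Lipschitz worst-case cost, and `φ`
`L'`-Lipschitz, then `v xΔ γ - vstar γ ≤ αΔ φ γ + Δ (L + αΔ L')` on all of `Γ`, where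
`Δ` is the grid size. -/
theorem stmt5 {α : Type*} (X : Set α) (T : ℕ)
    (g : Fin (T + 1) → ℝ) (hg : Monotone g)
    (v : α → ℝ → ℝ) (vstar : ℝ → ℝ)
    (hmono : ∀ x ∈ X, MonotoneOn (v x) (Set.Icc (g 0) (g (Fin.last T))))
    (hvstar : ∀ γ ∈ Set.Icc (g 0) (g (Fin.last T)),
      IsGLB {w | ∃ x ∈ X, w = v x γ} (vstar γ))
    (L : ℝ) (xj : Fin (T + 1) → α) (hxjX : ∀ t, xj t ∈ X)
    (hxjopt : ∀ t, v (xj t) (g t) = vstar (g t))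
    (hxjlip : ∀ t, ∀ γ₁ ∈ Set.Icc (g 0) (g (Fin.last T)),
      ∀ γ₂ ∈ Set.Icc (g 0) (g (Fin.last T)),
      |v (xj t) γ₁ - v (xj t) γ₂| ≤ L * |γ₁ - γ₂|)
    (φ : ℝ → ℝ) (L' : ℝ)
    (hφnn : ∀ γ ∈ Set.Icc (g 0) (g (Fin.last T)), 0 ≤ φ γ)
    (hφlip : ∀ γ₁ ∈ Set.Icc (g 0) (g (Fin.last T)),
      ∀ γ₂ ∈ Set.Icc (g 0) (g (Fin.last T)),
      |φ γ₁ - φ γ₂| ≤ L' * |γ₁ - γ₂|)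
    (xΔ : α) (hxΔ : xΔ ∈ X) (αΔ : ℝ) (hαΔ : 0 ≤ αΔ)
    (hdisc : ∀ t : Fin (T + 1), v xΔ (g t) - vstar (g t) ≤ αΔ * φ (g t))
    (Δ : ℝ)
    (hΔ : IsGreatest {w | ∃ t : Fin T, w = g t.succ - g t.castSucc} Δ) :
    ∀ γ ∈ Set.Icc (g 0) (g (Fin.last T)),
      v xΔ γ - vstar γ ≤ αΔ * φ γ + Δ * (L + αΔ * L') := by
  classical
  intro γ hγ
  obtain ⟨t0, ht0⟩ := hΔ.1
  have hT : 0 < T := t0.pos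
  by_cases hdeg : g 0 = g (Fin.last T)
  · have hγ0 : γ = g 0 := le_antisymm (hdeg ▸ hγ.2) hγ.1
    have hall : ∀ t : Fin (T + 1), g t = g 0 := fun t =>
      le_antisymm (hdeg ▸ hg (Fin.le_last t)) (hg (Fin.zero_le t))
    have hΔ0 : Δ = 0 := by rw [ht0, hall t0.succ, hall t0.castSucc]; ring
    have h0 := hdisc 0
    rw [hγ0, hΔ0]; linarith
  · have hlt : g 0 < g (Fin.last T) := lt_of_le_of_ne (hg (Fin.zero_le _)) hdeg
    have h0mem : g 0 ∈ Set.Icc (g 0) (g (Fin.last T)) := ⟨le_refl _, le_of_lt hlt⟩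
    have hlmem : g (Fin.last T) ∈ Set.Icc (g 0) (g (Fin.last T)) := ⟨le_of_lt hlt, le_refl _⟩
    have habs : |g 0 - g (Fin.last T)| = g (Fin.last T) - g 0 := by
      rw [abs_sub_comm, abs_of_pos (sub_pos.2 hlt)]
    have hL : 0 ≤ L := by
      have h := hxjlip 0 _ h0mem _ hlmem
      rw [habs] at h
      nlinarith [abs_nonneg (v (xj 0) (g 0) - v (xj 0) (g (Fin.last T)))]
    have hL' : 0 ≤ L' := by
      have h := hφlip _ h0mem _ hlmem
      rw [habs] at h
      nlinarith [abs_nonneg (φ (g 0) - φ (g (Fin.last T)))]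
    have hmem : ∀ t : Fin (T + 1), g t ∈ Set.Icc (g 0) (g (Fin.last T)) :=
      fun t => ⟨hg (Fin.zero_le t), hg (Fin.le_last t)⟩
    -- find bracketing interval
    set S := Finset.univ.filter (fun t : Fin (T + 1) => g t ≤ γ) with hS
    have hSne : S.Nonempty := ⟨0, by simp [hS, hγ.1]⟩
    set j := S.max' hSne with hj
    have hjle : g j ≤ γ := by
      have := S.max'_mem hSne; simp only [hS, Finset.mem_filter] at this; exact this.2
    obtain ⟨k, hk1, hk2⟩ : ∃ k : Fin T, g k.castSucc ≤ γ ∧ γ ≤ g k.succ := by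
      by_cases hjT : (j : ℕ) < T
      · refine ⟨⟨j, hjT⟩, ?_, ?_⟩
        · have : (⟨j, hjT⟩ : Fin T).castSucc = j := by ext; simp
          rw [this]; exact hjle
        · by_contra hcon
          push_neg at hcon
          have hmem' : (⟨j, hjT⟩ : Fin T).succ ∈ S := by
            simp [hS]; exact le_of_lt hcon
          have := S.le_max' _ hmem'
          rw [← hj] at this
          have hjlt : j < (⟨j, hjT⟩ : Fin T).succ := by
            rw [Fin.lt_def]; simp
          exact absurd this (not_le.2 hjlt)
      · have hjlast : j = Fin.last T := by
          ext; simp at hjT ⊢; omega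
        have hγlast : γ = g (Fin.last T) := le_antisymm hγ.2 (hjlast ▸ hjle)
        refine ⟨⟨T - 1, by omega⟩, ?_, ?_⟩
        · exact (hg (Fin.le_last _)).trans_eq hγlast.symm
        · have : (⟨T - 1, by omega⟩ : Fin T).succ = Fin.last T := by ext; simp; omega
          rw [this, hγlast]
      -- done bracketing
    have hΔk : g k.succ - g k.castSucc ≤ Δ := hΔ.2 ⟨k, rfl⟩
    have hab : g k.castSucc ≤ g k.succ := hg k.castSucc_le_succ
    have hma := hmem k.castSucc
    have hmb := hmem k.succ
    -- v xΔ γ ≤ v xΔ b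
    have h1 : v xΔ γ ≤ v xΔ (g k.succ) := hmono xΔ hxΔ hγ hmb hk2
    -- vstar a ≤ vstar γ
    have h2 : vstar (g k.castSucc) ≤ vstar γ := by
      apply (hvstar γ hγ).2
      rintro w ⟨x, hx, rfl⟩
      calc vstar (g k.castSucc) ≤ v x (g k.castSucc) := (hvstar _ hma).1 ⟨x, hx, rfl⟩
        _ ≤ v x γ := hmono x hx hma hγ hk1
    -- vstar b ≤ vstar a + L * Δ
    have h3 : vstar (g k.succ) ≤ vstar (g k.castSucc) + L * Δ := by
      have hle : vstar (g k.succ) ≤ v (xj k.castSucc) (g k.succ) :=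
        (hvstar _ hmb).1 ⟨xj k.castSucc, hxjX _, rfl⟩
      have hlip := hxjlip k.castSucc _ hmb _ hma
      rw [abs_of_nonneg (sub_nonneg.2 hab)] at hlip
      have := abs_le.1 hlip
      have hopt := hxjopt k.castSucc
      nlinarith [mul_le_mul_of_nonneg_left hΔk hL]
    -- φ b ≤ φ γ + L' * Δ
    have h4 : φ (g k.succ) ≤ φ γ + L' * Δ := by
      have hlip := hφlip _ hmb _ hγ
      rw [abs_of_nonneg (sub_nonneg.2 hk2)] at hlip
      have h' := abs_le.1 hlip
      have hbγ : g k.succ - γ ≤ Δ := by linarith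
      nlinarith [mul_le_mul_of_nonneg_left hbγ hL']
    have h5 := hdisc k.succ
    have h6 : αΔ * φ (g k.succ) ≤ αΔ * (φ γ + L' * Δ) :=
      mul_le_mul_of_nonneg_left h4 hαΔ
    nlinarith
end

section
/- In the setting of the previous discretization theorem, suppose additionally that $\phi_{\min} := \inf_{\gamma\in\Gamma}\phi(\gamma) > 0$, the grid points lie in $\Gamma$, and $\alpha_{garo}$ is the infimum of $\alpha \ge 0$ such that some $x \in X$ satisfies $v(x,\gamma) - v^\star(\gamma) \le \alpha\phi(\gamma)$ for all $\gamma \in \Gamma$. Then $0 \le \alpha_{garo} - \alpha^\Delta \le \Delta(L + \alpha^\Delta L')/\phi_{\min}$, where $\alpha^\Delta$ is the optimal value of the discretized problem (constraints only at grid points). -/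
/-- In the discretization setting, if additionally `φmin = inf φ > 0` and
`αgaro` is the infimum of feasible `α` for the full problem while `αΔ` is the minimum of
the discretized problem, then `0 ≤ αgaro - αΔ ≤ Δ (L + αΔ L') / φmin`. -/
theorem stmt6 {α : Type*} (X : Set α) (T : ℕ)
    (g : Fin (T + 1) → ℝ) (hg : Monotone g)
    (v : α → ℝ → ℝ) (vstar : ℝ → ℝ)
    (hmono : ∀ x ∈ X, MonotoneOn (v x) (Set.Icc (g 0) (g (Fin.last T))))
    (hvstar : ∀ γ ∈ Set.Icc (g 0) (g (Fin.last T)),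
      IsGLB {w | ∃ x ∈ X, w = v x γ} (vstar γ))
    (L : ℝ) (xj : Fin (T + 1) → α) (hxjX : ∀ t, xj t ∈ X)
    (hxjopt : ∀ t, v (xj t) (g t) = vstar (g t))
    (hxjlip : ∀ t, ∀ γ₁ ∈ Set.Icc (g 0) (g (Fin.last T)),
      ∀ γ₂ ∈ Set.Icc (g 0) (g (Fin.last T)),
      |v (xj t) γ₁ - v (xj t) γ₂| ≤ L * |γ₁ - γ₂|)
    (φ : ℝ → ℝ) (L' : ℝ)
    (hφlip : ∀ γ₁ ∈ Set.Icc (g 0) (g (Fin.last T)),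
      ∀ γ₂ ∈ Set.Icc (g 0) (g (Fin.last T)),
      |φ γ₁ - φ γ₂| ≤ L' * |γ₁ - γ₂|)
    (φmin : ℝ) (hφmin_pos : 0 < φmin)
    (hφmin : IsGLB {w | ∃ γ ∈ Set.Icc (g 0) (g (Fin.last T)), w = φ γ} φmin)
    (Δ : ℝ)
    (hΔ : IsGreatest {w | ∃ t : Fin T, w = g t.succ - g t.castSucc} Δ)
    (αΔ : ℝ)
    (hΔleast : IsLeast {β : ℝ | 0 ≤ β ∧ ∃ x ∈ X,
      ∀ t : Fin (T + 1), v x (g t) - vstar (g t) ≤ β * φ (g t)} αΔ)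
    (αgaro : ℝ)
    (hgaro : IsGLB {β : ℝ | 0 ≤ β ∧ ∃ x ∈ X,
      ∀ γ ∈ Set.Icc (g 0) (g (Fin.last T)), v x γ - vstar γ ≤ β * φ γ} αgaro) :
    0 ≤ αgaro - αΔ ∧ αgaro - αΔ ≤ Δ * (L + αΔ * L') / φmin := by

  have hI : ∀ i : Fin (T + 1), g i ∈ Set.Icc (g 0) (g (Fin.last T)) :=
    fun i => ⟨hg (Fin.zero_le i), hg (Fin.le_last i)⟩
  obtain ⟨⟨hαΔ0, x, hxX, hxfeas⟩, hΔlb⟩ := hΔleast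
  -- left inequality
  have hleft : αΔ ≤ αgaro := by
    apply hgaro.2
    rintro β ⟨hβ0, y, hyX, hy⟩
    exact hΔlb ⟨hβ0, y, hyX, fun t => hy (g t) (hI t)⟩
  obtain ⟨⟨t0, ht0⟩, hΔub⟩ := hΔ
  have hΔ0 : 0 ≤ Δ := by
    rw [ht0]
    exact sub_nonneg.2 (hg t0.castSucc_lt_succ.le)
  -- key nonnegativity and feasibility bound, by cases on Δ
  have hmain : 0 ≤ Δ * (L + αΔ * L') ∧
      ∀ γ ∈ Set.Icc (g 0) (g (Fin.last T)),
        v x γ - vstar γ ≤ αΔ * φ γ + Δ * (L + αΔ * L') := by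
    rcases eq_or_lt_of_le hΔ0 with hΔeq | hΔpos
    · -- Δ = 0 : grid is constant
      have hconst : ∀ n, ∀ h : n ≤ T, g ⟨n, Nat.lt_succ_of_le h⟩ ≤ g 0 := by
        intro n
        induction n with
        | zero => intro h; exact le_refl _
        | succ n ih =>
          intro h
          have hn : n ≤ T := Nat.le_of_succ_le h
          have ht : (⟨n, h⟩ : Fin T).succ = (⟨n + 1, Nat.lt_succ_of_le h⟩ : Fin (T + 1)) := rfl
          have ht2 : (⟨n, h⟩ : Fin T).castSucc = (⟨n, Nat.lt_succ_of_le hn⟩ : Fin (T + 1)) := rfl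
          have hgap := hΔub ⟨⟨n, h⟩, rfl⟩
          rw [← hΔeq] at hgap
          rw [ht, ht2] at hgap
          have := ih hn
          linarith
      have hlast : g (Fin.last T) ≤ g 0 := by
        have := hconst T le_rfl
        simpa [Fin.last] using this
      constructor
      · rw [← hΔeq]; simp
      · intro γ hγ
        have hγ0 : γ = g 0 := le_antisymm (hγ.2.trans hlast) hγ.1
        have := hxfeas 0
        rw [hγ0, ← hΔeq]
        linarith
    · -- Δ > 0 : get L ≥ 0, L' ≥ 0
      obtain ⟨hL0, hL'0⟩ : 0 ≤ L ∧ 0 ≤ L' := by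
        have habs : |g t0.castSucc - g t0.succ| = Δ := by
          rw [abs_sub_comm, abs_of_nonneg (by linarith [ht0])]; linarith [ht0]
        have h1 := hxjlip 0 (g t0.castSucc) (hI _) (g t0.succ) (hI _)
        have h2 := hφlip (g t0.castSucc) (hI _) (g t0.succ) (hI _)
        rw [habs] at h1 h2
        constructor
        · nlinarith [abs_nonneg (v (xj 0) (g t0.castSucc) - v (xj 0) (g t0.succ))]
        · nlinarith [abs_nonneg (φ (g t0.castSucc) - φ (g t0.succ))]
      have hkey : 0 ≤ Δ * (L + αΔ * L') := by positivity
      refine ⟨hkey, fun γ hγ => ?_⟩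
      obtain ⟨hγ1, hγ2⟩ := hγ
      have hγmem : γ ∈ Set.Icc (g 0) (g (Fin.last T)) := ⟨hγ1, hγ2⟩
      classical
      set S : Finset (Fin (T + 1)) := Finset.univ.filter (fun i => g i ≤ γ) with hS
      have hSne : S.Nonempty := ⟨0, by simp [hS, hγ1]⟩
      set i := S.max' hSne with hi
      have hgi : g i ≤ γ := by
        have := S.max'_mem hSne
        simp only [hS, Finset.mem_filter] at this
        exact this.2
      by_cases hiT : (i : ℕ) < T
      · set t : Fin T := ⟨i, hiT⟩ with htdef
        have hcast : t.castSucc = i := rfl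
        have htc : g t.castSucc ≤ γ := hcast ▸ hgi
        have hts : γ ≤ g t.succ := by
          by_contra h
          push_neg at h
          have hmem : t.succ ∈ S := by
            simp only [hS, Finset.mem_filter, Finset.mem_univ, true_and]
            exact h.le
          have hle := S.le_max' _ hmem
          rw [← hi, ← hcast] at hle
          exact absurd hle t.castSucc_lt_succ.not_ge
        have hgap : g t.succ - g t.castSucc ≤ Δ := hΔub ⟨t, rfl⟩
        have hgap0 : 0 ≤ g t.succ - g t.castSucc := sub_nonneg.2 (hg t.castSucc_lt_succ.le)
        -- A
        have hA : v x γ ≤ v x (g t.succ) := hmono x hxX hγmem (hI _) hts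
        -- B
        have hB := hxfeas t.succ
        -- C : vstar (g t.castSucc) ≤ vstar γ
        have hC : vstar (g t.castSucc) ≤ vstar γ := by
          apply (hvstar γ hγmem).2
          rintro w ⟨x', hx', rfl⟩
          calc vstar (g t.castSucc) ≤ v x' (g t.castSucc) :=
                (hvstar _ (hI _)).1 ⟨x', hx', rfl⟩
            _ ≤ v x' γ := hmono x' hx' (hI _) hγmem htc
        -- D : vstar (g t.succ) ≤ vstar (g t.castSucc) + L * Δ
        have hD : vstar (g t.succ) ≤ vstar (g t.castSucc) + L * Δ := by
          have h1 := hxjopt t.castSucc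
          have h2 := hxjlip t.castSucc (g t.succ) (hI _) (g t.castSucc) (hI _)
          have h3 : vstar (g t.succ) ≤ v (xj t.castSucc) (g t.succ) :=
            (hvstar _ (hI _)).1 ⟨_, hxjX _, rfl⟩
          rw [abs_of_nonneg hgap0] at h2
          have h4 : L * (g t.succ - g t.castSucc) ≤ L * Δ :=
            mul_le_mul_of_nonneg_left hgap hL0
          have h5 := abs_le.1 h2
          linarith [h5.2]
        -- E : φ (g t.succ) ≤ φ γ + L' * Δ
        have hE : φ (g t.succ) ≤ φ γ + L' * Δ := by
          have h2 := hφlip (g t.succ) (hI _) γ hγmem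
          have habs : |g t.succ - γ| ≤ Δ := by
            rw [abs_of_nonneg (by linarith)]
            linarith
          have h4 : L' * |g t.succ - γ| ≤ L' * Δ := mul_le_mul_of_nonneg_left habs hL'0
          have h5 := abs_le.1 h2
          linarith [h5.1]
        have hαE : αΔ * φ (g t.succ) ≤ αΔ * (φ γ + L' * Δ) :=
          mul_le_mul_of_nonneg_left hE hαΔ0
        nlinarith
      · have hieq : i = Fin.last T := by
          apply Fin.ext
          have := i.isLt
          simp only [Fin.val_last]
          omega
        have hγlast : γ = g (Fin.last T) := le_antisymm hγ2 (hieq ▸ hgi)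
        have := hxfeas (Fin.last T)
        rw [hγlast]
        linarith
  obtain ⟨hkey, hfeas⟩ := hmain
  have hq : 0 ≤ Δ * (L + αΔ * L') / φmin := div_nonneg hkey hφmin_pos.le
  have hβfeas : (αΔ + Δ * (L + αΔ * L') / φmin) ∈ {β : ℝ | 0 ≤ β ∧ ∃ x ∈ X,
      ∀ γ ∈ Set.Icc (g 0) (g (Fin.last T)), v x γ - vstar γ ≤ β * φ γ} := by
    refine ⟨by linarith, x, hxX, fun γ hγ => ?_⟩
    have hφγ : φmin ≤ φ γ := hφmin.1 ⟨γ, hγ, rfl⟩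
    have h1 := hfeas γ hγ
    have h2 : Δ * (L + αΔ * L') ≤ Δ * (L + αΔ * L') / φmin * φ γ := by
      have h3 : Δ * (L + αΔ * L') / φmin * φmin ≤ Δ * (L + αΔ * L') / φmin * φ γ :=
        mul_le_mul_of_nonneg_left hφγ (div_nonneg hkey hφmin_pos.le)
      rwa [div_mul_cancel₀ _ hφmin_pos.ne'] at h3
    calc v x γ - vstar γ ≤ αΔ * φ γ + Δ * (L + αΔ * L') := h1
      _ ≤ αΔ * φ γ + Δ * (L + αΔ * L') / φmin * φ γ := by linarith
      _ = (αΔ + Δ * (L + αΔ * L') / φmin) * φ γ := by ring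
  have hright : αgaro ≤ αΔ + Δ * (L + αΔ * L') / φmin := hgaro.1 hβfeas
  exact ⟨by linarith, by linarith⟩
end

section
/- Let $\psi : [0,\infty) \to \mathbb{R}$ be concave and nondecreasing with $\psi(r) - \psi(0) \le C\sqrt{r/2}$ for all $r \ge 0$, for some constant $C \ge 0$. Then the function $\gamma \mapsto \psi(\gamma^2)$ is Lipschitz on $[0,\infty)$ with Lipschitz constant $\sqrt{2}\,C$. -/
lemma stmt10_aux (ψ : ℝ → ℝ) (C : ℝ) (hC : 0 ≤ C)
    (hconc : ConcaveOn ℝ (Set.Ici 0) ψ)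
    (hgrow : ∀ r : ℝ, 0 ≤ r → ψ r - ψ 0 ≤ C * Real.sqrt (r / 2)) :
    ∀ a b : ℝ, 0 ≤ a → a ≤ b →
      ψ (b ^ 2) - ψ (a ^ 2) ≤ Real.sqrt 2 * C * (b - a) := by
  intro a b ha hab
  rcases eq_or_lt_of_le (ha.trans hab) with hb0 | hb0
  · have : a = 0 := le_antisymm (hab.trans hb0.ge) ha
    simp [this, ← hb0]
  · set t : ℝ := a ^ 2 / b ^ 2 with ht
    have hb2 : (0:ℝ) < b ^ 2 := by positivity
    have ht0 : 0 ≤ t := by positivity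
    have ht1 : t ≤ 1 := by
      rw [ht, div_le_one hb2]
      exact pow_le_pow_left₀ ha hab 2
    have key : (1 - t) • ψ 0 + t • ψ (b ^ 2) ≤ ψ (a ^ 2) := by
      have := hconc.2 (Set.mem_Ici.2 le_rfl) (Set.mem_Ici.2 hb2.le)
        (by linarith : (0:ℝ) ≤ 1 - t) ht0 (by ring)
      have he : (1 - t) • (0:ℝ) + t • (b ^ 2) = a ^ 2 := by
        simp only [smul_eq_mul, mul_zero, zero_add, ht]; exact div_mul_cancel₀ (a ^ 2) hb2.ne'
      rwa [he] at this
    have hgr := hgrow (b ^ 2) hb2.le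
    have h1 : ψ (b ^ 2) - ψ (a ^ 2) ≤ (1 - t) * (ψ (b ^ 2) - ψ 0) := by
      simp only [smul_eq_mul] at key; nlinarith
    have hsq : Real.sqrt (b ^ 2 / 2) = b / Real.sqrt 2 := by
      rw [Real.sqrt_div (by positivity), Real.sqrt_sq (ha.trans hab)]
    rw [hsq] at hgr
    have h2 : ψ (b ^ 2) - ψ (a ^ 2) ≤ (1 - t) * (C * (b / Real.sqrt 2)) :=
      h1.trans (by
        apply mul_le_mul_of_nonneg_left hgr (by linarith))
    refine h2.trans ?_
    have hs : Real.sqrt 2 * Real.sqrt 2 = 2 := Real.mul_self_sqrt (by norm_num)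
    have hs0 : (0:ℝ) < Real.sqrt 2 := by positivity
    have h1t : 1 - t = (b ^ 2 - a ^ 2) / b ^ 2 := by
      field_simp [ht]; rw [sub_mul, ht, div_mul_cancel₀ _ hb2.ne', one_mul]
    have hd : b / Real.sqrt 2 = b * Real.sqrt 2 / 2 := by
      rw [div_eq_div_iff hs0.ne' two_ne_zero]; nlinarith [hs]
    rw [h1t, hd, div_mul_eq_mul_div, div_le_iff₀ hb2]
    nlinarith [hs, mul_nonneg (mul_nonneg (mul_nonneg hs0.le hC) hb0.le) (sq_nonneg (b - a))]

/-- If `ψ` is concave and nondecreasing on `[0,∞)` with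
`ψ r - ψ 0 ≤ C √(r/2)`, then `γ ↦ ψ (γ²)` is `√2 C`-Lipschitz on `[0,∞)`. -/
theorem stmt10 (ψ : ℝ → ℝ) (C : ℝ) (hC : 0 ≤ C)
    (hconc : ConcaveOn ℝ (Set.Ici 0) ψ) (hmono : MonotoneOn ψ (Set.Ici 0))
    (hgrow : ∀ r : ℝ, 0 ≤ r → ψ r - ψ 0 ≤ C * Real.sqrt (r / 2)) :
    ∀ γ₁ ∈ Set.Ici (0 : ℝ), ∀ γ₂ ∈ Set.Ici (0 : ℝ),
      |ψ (γ₁ ^ 2) - ψ (γ₂ ^ 2)| ≤ Real.sqrt 2 * C * |γ₁ - γ₂| := by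
  intro γ₁ h₁ γ₂ h₂
  simp only [Set.mem_Ici] at h₁ h₂
  rcases le_total γ₁ γ₂ with h | h
  · rw [abs_sub_comm, abs_of_nonneg (sub_nonneg.2 (hmono (Set.mem_Ici.2 (by positivity)) (Set.mem_Ici.2 (by positivity))
      (pow_le_pow_left₀ h₁ h 2))), abs_sub_comm, abs_of_nonneg (sub_nonneg.2 h)]
    exact stmt10_aux ψ C hC hconc hgrow γ₁ γ₂ h₁ h
  · rw [abs_of_nonneg (sub_nonneg.2 (hmono (Set.mem_Ici.2 (by positivity)) (Set.mem_Ici.2 (by positivity))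
      (pow_le_pow_left₀ h₂ h 2))), abs_of_nonneg (sub_nonneg.2 h)]
    exact stmt10_aux ψ C hC hconc hgrow γ₂ γ₁ h₂ h
end

section
/- Let $\Xi \subseteq \mathbb{R}^n$ be compact with circumradius $\|\Xi\| = \min_{s}\max_{\xi\in\Xi}\|\xi - s\|$, and let $\mathbb{P}_0$ be a probability measure supported on $\Xi$ with variance $v(\mathbb{P}_0) = \int\|\xi - \mu_0\|^2 d\mathbb{P}_0$ about its mean $\mu_0$. Then for any $\gamma_0 \ge 0$, the Wasserstein-robust facility location value satisfies $\min_{\mu}\sup\{\int\|\xi-\mu\|^2 d\mathbb{P} : W_1(\mathbb{P},\mathbb{P}_0) \le \gamma_0\} \ge \max(0, 1 - \gamma_0/(2\|\Xi\|))\, v(\mathbb{P}_0) + \min(\gamma_0/2, \|\Xi\|)\,\|\Xi\|$. -/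
open MeasureTheory

/-- The 1-Wasserstein distance between two measures, as the infimum of the transport
cost over all couplings. -/
noncomputable def wass1 {E : Type*} [NormedAddCommGroup E] [MeasurableSpace E]
    (P Q : Measure E) : ENNReal :=
  ⨅ (T : Measure (E × E)) (_ : T.map Prod.fst = P ∧ T.map Prod.snd = Q),
    ∫⁻ p, ENNReal.ofReal ‖p.1 - p.2‖ ∂T

set_option maxHeartbeats 1000000 in
/-- Lower bound on the Wasserstein-robust facility location value:
for `Ξ` compact with circumradius `R` and `P₀` supported on `Ξ` with mean `μ₀` and
variance `v(P₀)`, for every hub location `μ`,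
`max(0, 1-γ₀/(2R))·v(P₀) + min(γ₀/2, R)·R ≤ sup{∫‖ξ-μ‖² dP : W₁(P,P₀) ≤ γ₀}`. -/
theorem stmt13 {n : ℕ} (Ξ : Set (EuclideanSpace ℝ (Fin n)))
    (hΞ : IsCompact Ξ) (hΞne : Ξ.Nonempty)
    (R : ℝ) (hR : IsLeast {r : ℝ | ∃ s, ∀ ξ ∈ Ξ, ‖ξ - s‖ ≤ r} R)
    (P₀ : Measure (EuclideanSpace ℝ (Fin n))) [IsProbabilityMeasure P₀] (hP₀ : P₀ Ξᶜ = 0)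
    (γ₀ : ℝ) (hγ₀ : 0 ≤ γ₀) :
    ∀ μ : EuclideanSpace ℝ (Fin n),
      max 0 (1 - γ₀ / (2 * R)) * (∫ ξ, ‖ξ - (∫ ξ', ξ' ∂P₀)‖ ^ 2 ∂P₀)
          + min (γ₀ / 2) R * R
        ≤ sSup {w : ℝ | ∃ P : Measure (EuclideanSpace ℝ (Fin n)),
            IsProbabilityMeasure P ∧ P Ξᶜ = 0 ∧ wass1 P P₀ ≤ ENNReal.ofReal γ₀ ∧
            w = ∫ ξ, ‖ξ - μ‖ ^ 2 ∂P} := by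
  intro μ
  obtain ⟨⟨s, hs⟩, hleast⟩ := hR
  obtain ⟨ξ₀, hξ₀⟩ := hΞne
  have hR0 : 0 ≤ R := le_trans (norm_nonneg _) (hs ξ₀ hξ₀)
  have haeΞ : ∀ᵐ x ∂P₀, x ∈ Ξ := by
    rw [MeasureTheory.ae_iff]; exact hP₀
  -- farthest point from μ in Ξ
  obtain ⟨ξs, hξsΞ, hmax⟩ := hΞ.exists_isMaxOn ⟨ξ₀, hξ₀⟩
    ((continuous_id.sub continuous_const).norm.continuousOn
      : ContinuousOn (fun x : EuclideanSpace ℝ (Fin n) => ‖x - μ‖) Ξ)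
  have hmax' : ∀ ξ ∈ Ξ, ‖ξ - μ‖ ≤ ‖ξs - μ‖ := fun ξ hξ => hmax hξ
  have hRξs : R ≤ ‖ξs - μ‖ := hleast ⟨μ, hmax'⟩
  -- integrability of ‖·-c‖² wrt a probability measure supported on Ξ
  have hint : ∀ (P : Measure (EuclideanSpace ℝ (Fin n))) [IsProbabilityMeasure P], P Ξᶜ = 0 →
      ∀ c : EuclideanSpace ℝ (Fin n), Integrable (fun ξ => ‖ξ - c‖ ^ 2) P := by
    intro P _ hP c
    have hae : ∀ᵐ x ∂P, x ∈ Ξ := by rw [MeasureTheory.ae_iff]; exact hP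
    refine Integrable.mono' (integrable_const ((R + ‖s - c‖) ^ 2))
      ((continuous_id.sub continuous_const).norm.pow 2).aestronglyMeasurable ?_
    refine hae.mono fun x hx => ?_
    rw [Real.norm_of_nonneg (by positivity)]
    have h1 : ‖x - c‖ ≤ R + ‖s - c‖ := by
      calc ‖x - c‖ ≤ ‖x - s‖ + ‖s - c‖ := norm_sub_le_norm_sub_add_norm_sub x s c
        _ ≤ R + ‖s - c‖ := by linarith [hs x hx]
    have := norm_nonneg (x - c)
    nlinarith
  -- integrability of identity
  have hid : Integrable (fun ξ : EuclideanSpace ℝ (Fin n) => ξ) P₀ := by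
    refine Integrable.mono' (integrable_const (R + ‖s‖))
      continuous_id.aestronglyMeasurable ?_
    refine haeΞ.mono fun x hx => ?_
    calc ‖x‖ ≤ ‖x - s‖ + ‖s‖ := by simpa using norm_add_le (x - s) s
      _ ≤ R + ‖s‖ := by linarith [hs x hx]
  set μ₀ : EuclideanSpace ℝ (Fin n) := ∫ ξ', ξ' ∂P₀ with hμ₀
  -- variance ≤ second moment about μ
  have hvar_le : (∫ ξ, ‖ξ - μ₀‖ ^ 2 ∂P₀) ≤ ∫ ξ, ‖ξ - μ‖ ^ 2 ∂P₀ := by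
    have hsubint : Integrable (fun ξ : EuclideanSpace ℝ (Fin n) => ξ - μ₀) P₀ :=
      hid.sub (integrable_const μ₀)
    have hcent : (∫ ξ, (ξ - μ₀) ∂P₀) = 0 := by
      rw [integral_sub hid (integrable_const μ₀), integral_const]
      simp [hμ₀]
    have hexp : ∀ ξ : EuclideanSpace ℝ (Fin n), ‖ξ - μ‖ ^ 2
        = ‖ξ - μ₀‖ ^ 2 + 2 * (inner ℝ (μ₀ - μ) (ξ - μ₀) : ℝ) + ‖μ₀ - μ‖ ^ 2 := by
      intro ξ
      have h : ξ - μ = (ξ - μ₀) + (μ₀ - μ) := by abel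
      rw [h, norm_add_sq_real]
      ring_nf
      rw [real_inner_comm]
      ring
    have hi1 : Integrable (fun ξ : EuclideanSpace ℝ (Fin n) => ‖ξ - μ₀‖ ^ 2) P₀ :=
      hint P₀ hP₀ μ₀
    have hi2 : Integrable (fun ξ : EuclideanSpace ℝ (Fin n)
        => 2 * (inner ℝ (μ₀ - μ) (ξ - μ₀) : ℝ)) P₀ := by
      have h : Integrable (fun ξ : EuclideanSpace ℝ (Fin n)
          => (inner ℝ (μ₀ - μ) (ξ - μ₀) : ℝ)) P₀ := by
        refine Integrable.mono' (integrable_const (‖μ₀ - μ‖ * (R + ‖s - μ₀‖)))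
          ((continuous_const.inner (continuous_id.sub continuous_const)).aestronglyMeasurable) ?_
        refine haeΞ.mono fun x hx => ?_
        calc ‖(inner ℝ (μ₀ - μ) (x - μ₀) : ℝ)‖ ≤ ‖μ₀ - μ‖ * ‖x - μ₀‖ := by
              rw [Real.norm_eq_abs]; exact abs_real_inner_le_norm _ _
          _ ≤ ‖μ₀ - μ‖ * (R + ‖s - μ₀‖) := by
              have h1 : ‖x - μ₀‖ ≤ R + ‖s - μ₀‖ := by
                calc ‖x - μ₀‖ ≤ ‖x - s‖ + ‖s - μ₀‖ := norm_sub_le_norm_sub_add_norm_sub x s μ₀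
                  _ ≤ R + ‖s - μ₀‖ := by linarith [hs x hx]
              exact mul_le_mul_of_nonneg_left h1 (norm_nonneg _)
      exact h.const_mul 2
    have h1 : (∫ ξ, ‖ξ - μ‖ ^ 2 ∂P₀)
        = ∫ ξ, (‖ξ - μ₀‖ ^ 2 + 2 * (inner ℝ (μ₀ - μ) (ξ - μ₀) : ℝ) + ‖μ₀ - μ‖ ^ 2) ∂P₀ := by
      apply integral_congr_ae
      filter_upwards with ξ using hexp ξ
    have hzero : (∫ ξ, 2 * (inner ℝ (μ₀ - μ) (ξ - μ₀) : ℝ) ∂P₀) = 0 := by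
      rw [integral_const_mul]
      rw [integral_inner (𝕜 := ℝ) hsubint (μ₀ - μ), hcent, inner_zero_right, mul_zero]
    have hi12 : Integrable (fun ξ : EuclideanSpace ℝ (Fin n)
        => ‖ξ - μ₀‖ ^ 2 + 2 * (inner ℝ (μ₀ - μ) (ξ - μ₀) : ℝ)) P₀ := hi1.add hi2
    have h2 : (∫ ξ, (‖ξ - μ₀‖ ^ 2 + 2 * (inner ℝ (μ₀ - μ) (ξ - μ₀) : ℝ) + ‖μ₀ - μ‖ ^ 2) ∂P₀)
        = (∫ ξ, ‖ξ - μ₀‖ ^ 2 ∂P₀) + ‖μ₀ - μ‖ ^ 2 := by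
      rw [integral_add hi12 (integrable_const _), integral_add hi1 hi2, hzero, integral_const]
      simp
    rw [h1, h2]
    nlinarith [sq_nonneg ‖μ₀ - μ‖]
  -- the adversarial mixing weight
  set α : ℝ := min 1 (γ₀ / (2 * R)) with hα
  have hα0 : 0 ≤ α := le_min zero_le_one (by positivity)
  have hα1 : α ≤ 1 := min_le_left _ _
  have h1α : 0 ≤ 1 - α := by linarith
  have hα2R : α * (2 * R) ≤ γ₀ := by
    rcases eq_or_lt_of_le hR0 with h | h
    · simp [← h, hγ₀]
    · have h2 : α ≤ γ₀ / (2 * R) := min_le_right _ _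
      calc α * (2 * R) ≤ (γ₀ / (2 * R)) * (2 * R) :=
            mul_le_mul_of_nonneg_right h2 (by linarith)
        _ = γ₀ := by field_simp
  -- the adversarial distribution
  set Pa : Measure (EuclideanSpace ℝ (Fin n)) :=
    ENNReal.ofReal (1 - α) • P₀ + ENNReal.ofReal α • Measure.dirac ξs with hPa
  have hPaprob : IsProbabilityMeasure Pa := by
    constructor
    rw [hPa, Measure.add_apply, Measure.smul_apply, Measure.smul_apply, measure_univ,
      measure_univ, smul_eq_mul, smul_eq_mul, mul_one, mul_one,
      ← ENNReal.ofReal_add h1α hα0]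
    norm_num
  have hΞmeas : MeasurableSet Ξ := hΞ.isClosed.measurableSet
  have hdiracΞ : (Measure.dirac ξs) Ξᶜ = 0 := by
    rw [Measure.dirac_apply' _ hΞmeas.compl]
    simp [hξsΞ]
  have hPaΞ : Pa Ξᶜ = 0 := by
    rw [hPa, Measure.add_apply, Measure.smul_apply, Measure.smul_apply, hP₀, hdiracΞ]
    simp
  -- the coupling
  have hmdiag : Measurable (fun x : EuclideanSpace ℝ (Fin n) => (x, x)) :=
    measurable_id.prodMk measurable_id
  have hmconst : Measurable (fun x : EuclideanSpace ℝ (Fin n) => (ξs, x)) :=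
    measurable_const.prodMk measurable_id
  set T : Measure (EuclideanSpace ℝ (Fin n) × EuclideanSpace ℝ (Fin n)) :=
    ENNReal.ofReal (1 - α) • (P₀.map (fun x => (x, x)))
      + ENNReal.ofReal α • (P₀.map (fun x => (ξs, x))) with hT
  have hfst : T.map Prod.fst = Pa := by
    rw [hT, Measure.map_add _ _ measurable_fst, Measure.map_smul, Measure.map_smul,
      Measure.map_map measurable_fst hmdiag, Measure.map_map measurable_fst hmconst]
    have e1 : (Prod.fst ∘ fun x : EuclideanSpace ℝ (Fin n) => (x, x)) = id := rfl
    have e2 : (Prod.fst ∘ fun x : EuclideanSpace ℝ (Fin n) => (ξs, x)) = fun _ => ξs := rfl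
    rw [e1, e2, Measure.map_id, Measure.map_const, measure_univ, one_smul, hPa]
  have hsnd : T.map Prod.snd = P₀ := by
    rw [hT, Measure.map_add _ _ measurable_snd, Measure.map_smul, Measure.map_smul,
      Measure.map_map measurable_snd hmdiag, Measure.map_map measurable_snd hmconst]
    have e1 : (Prod.snd ∘ fun x : EuclideanSpace ℝ (Fin n) => (x, x)) = id := rfl
    have e2 : (Prod.snd ∘ fun x : EuclideanSpace ℝ (Fin n) => (ξs, x)) = id := rfl
    rw [e1, e2, Measure.map_id, ← add_smul, ← ENNReal.ofReal_add h1α hα0]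
    norm_num
  have hwass : wass1 Pa P₀ ≤ ENNReal.ofReal γ₀ := by
    have hm : Measurable (fun p : EuclideanSpace ℝ (Fin n) × EuclideanSpace ℝ (Fin n)
        => ENNReal.ofReal ‖p.1 - p.2‖) :=
      ((continuous_fst.sub continuous_snd).norm.measurable).ennreal_ofReal
    have hcost : (∫⁻ p, ENNReal.ofReal ‖p.1 - p.2‖ ∂T) ≤ ENNReal.ofReal γ₀ := by
      rw [hT, lintegral_add_measure, lintegral_smul_measure, lintegral_smul_measure,
        lintegral_map hm hmdiag, lintegral_map hm hmconst]
      have hz : (∫⁻ x, ENNReal.ofReal ‖x - x‖ ∂P₀) = 0 := by simp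
      have hb : (∫⁻ x, ENNReal.ofReal ‖ξs - x‖ ∂P₀) ≤ ENNReal.ofReal (2 * R) := by
        have hae : ∀ᵐ x ∂P₀, ENNReal.ofReal ‖ξs - x‖ ≤ ENNReal.ofReal (2 * R) := by
          refine haeΞ.mono fun x hx => ENNReal.ofReal_le_ofReal ?_
          calc ‖ξs - x‖ ≤ ‖ξs - s‖ + ‖s - x‖ := norm_sub_le_norm_sub_add_norm_sub ξs s x
            _ ≤ 2 * R := by
                have h1 := hs ξs hξsΞ
                have h2 := hs x hx
                rw [norm_sub_rev] at h2
                linarith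
        calc (∫⁻ x, ENNReal.ofReal ‖ξs - x‖ ∂P₀)
            ≤ ∫⁻ _, ENNReal.ofReal (2 * R) ∂P₀ := lintegral_mono_ae hae
          _ = ENNReal.ofReal (2 * R) := by simp
      calc ENNReal.ofReal (1 - α) * (∫⁻ x, ENNReal.ofReal ‖x - x‖ ∂P₀)
            + ENNReal.ofReal α * (∫⁻ x, ENNReal.ofReal ‖ξs - x‖ ∂P₀)
          ≤ ENNReal.ofReal (1 - α) * 0 + ENNReal.ofReal α * ENNReal.ofReal (2 * R) := by
            gcongr
            · exact le_of_eq hz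
        _ = ENNReal.ofReal (α * (2 * R)) := by
            rw [mul_zero, zero_add, ← ENNReal.ofReal_mul hα0]
        _ ≤ ENNReal.ofReal γ₀ := ENNReal.ofReal_le_ofReal hα2R
    exact le_trans (iInf₂_le T ⟨hfst, hsnd⟩) hcost
  -- value of the adversarial distribution
  have hidirac : IsProbabilityMeasure (Measure.dirac ξs) := inferInstance
  have hval : (∫ ξ, ‖ξ - μ‖ ^ 2 ∂Pa)
      = (1 - α) * (∫ ξ, ‖ξ - μ‖ ^ 2 ∂P₀) + α * ‖ξs - μ‖ ^ 2 := by
    rw [hPa, integral_add_measure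
      ((hint P₀ hP₀ μ).smul_measure ENNReal.ofReal_ne_top)
      ((hint (Measure.dirac ξs) hdiracΞ μ).smul_measure ENNReal.ofReal_ne_top),
      integral_smul_measure, integral_smul_measure,
      ENNReal.toReal_ofReal h1α, ENNReal.toReal_ofReal hα0,
      integral_dirac (fun ξ => ‖ξ - μ‖ ^ 2) ξs]
    simp [smul_eq_mul]
  -- the sup set
  have hbdd : BddAbove {w : ℝ | ∃ P : Measure (EuclideanSpace ℝ (Fin n)),
      IsProbabilityMeasure P ∧ P Ξᶜ = 0 ∧ wass1 P P₀ ≤ ENNReal.ofReal γ₀ ∧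
      w = ∫ ξ, ‖ξ - μ‖ ^ 2 ∂P} := by
    refine ⟨(R + ‖s - μ‖) ^ 2, fun w hw => ?_⟩
    obtain ⟨P, hprob, hsupp, -, rfl⟩ := hw
    have hae : ∀ᵐ x ∂P, x ∈ Ξ := by rw [MeasureTheory.ae_iff]; exact hsupp
    calc (∫ ξ, ‖ξ - μ‖ ^ 2 ∂P) ≤ ∫ _, (R + ‖s - μ‖) ^ 2 ∂P := by
          refine integral_mono_of_nonneg (Filter.Eventually.of_forall fun x => by positivity)
            (integrable_const _) (hae.mono fun x hx => ?_)
          show ‖x - μ‖ ^ 2 ≤ (R + ‖s - μ‖) ^ 2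
          have h1 : ‖x - μ‖ ≤ R + ‖s - μ‖ := by
            calc ‖x - μ‖ ≤ ‖x - s‖ + ‖s - μ‖ := norm_sub_le_norm_sub_add_norm_sub x s μ
              _ ≤ R + ‖s - μ‖ := by linarith [hs x hx]
          nlinarith [norm_nonneg (x - μ), norm_nonneg (s - μ)]
      _ = (R + ‖s - μ‖) ^ 2 := by simp
  have hmem : (∫ ξ, ‖ξ - μ‖ ^ 2 ∂Pa) ∈ {w : ℝ | ∃ P : Measure (EuclideanSpace ℝ (Fin n)),
      IsProbabilityMeasure P ∧ P Ξᶜ = 0 ∧ wass1 P P₀ ≤ ENNReal.ofReal γ₀ ∧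
      w = ∫ ξ, ‖ξ - μ‖ ^ 2 ∂P} := ⟨Pa, hPaprob, hPaΞ, hwass, rfl⟩
  refine le_trans ?_ (le_csSup hbdd hmem)
  rw [hval]
  -- final arithmetic
  have hv0 : 0 ≤ ∫ ξ, ‖ξ - μ₀‖ ^ 2 ∂P₀ := integral_nonneg fun ξ => by positivity
  have hR2K : R ^ 2 ≤ ‖ξs - μ‖ ^ 2 := by nlinarith [norm_nonneg (ξs - μ)]
  rcases eq_or_lt_of_le hR0 with h | h
  · have hα' : α = 0 := by rw [hα, ← h]; norm_num
    rw [← h, hα']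
    norm_num
    exact hvar_le
  · rcases le_or_gt γ₀ (2 * R) with hle | hlt
    · have hαval : α = γ₀ / (2 * R) := by
        rw [hα, min_eq_right]
        rw [div_le_one (by linarith)]
        exact hle
      have hmax0 : max 0 (1 - γ₀ / (2 * R)) = 1 - α := by
        rw [hαval, max_eq_right]
        have : γ₀ / (2 * R) ≤ 1 := by rw [div_le_one (by linarith)]; exact hle
        linarith
      have hmin0 : min (γ₀ / 2) R = γ₀ / 2 := by
        rw [min_eq_left]; linarith
      have hαR : α * (2 * R) = γ₀ := by
        rw [hαval]; field_simp
      rw [hmax0, hmin0]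
      have h1 : (1 - α) * (∫ ξ, ‖ξ - μ₀‖ ^ 2 ∂P₀) ≤ (1 - α) * ∫ ξ, ‖ξ - μ‖ ^ 2 ∂P₀ :=
        mul_le_mul_of_nonneg_left hvar_le h1α
      have h2 : α * R ^ 2 ≤ α * ‖ξs - μ‖ ^ 2 := mul_le_mul_of_nonneg_left hR2K hα0
      have h3 : γ₀ / 2 * R = α * R ^ 2 := by rw [← hαR]; ring
      linarith
    · have hαval : α = 1 := by
        rw [hα, min_eq_left]
        rw [le_div_iff₀ (by linarith)]
        linarith
      have hmax0 : max 0 (1 - γ₀ / (2 * R)) = 0 := by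
        rw [max_eq_left]
        have : (1 : ℝ) ≤ γ₀ / (2 * R) := by rw [le_div_iff₀ (by linarith)]; linarith
        linarith
      have hmin0 : min (γ₀ / 2) R = R := by
        rw [min_eq_right]; linarith
      rw [hmax0, hmin0, hαval]
      norm_num
      nlinarith [hR2K]
end

section
/- Let $X = \{x^1, x^2, x^3\} \subseteq \mathbb{R}^2$ with $x^1 = (0,2)$, $x^2 = (1,0)$, $x^3 = (1/2, 17/10)$, $p_0 = (1,0)$, and $v(x,\gamma) = p_0^\top x + \gamma\|x\|_2$. With target $f_0 = 1/2$, the satisficing problem $\min\{\alpha \ge 0 : \exists x\in X,\ v(x,\gamma) \le f_0 + \alpha\gamma\ \forall\gamma\ge 0\}$ has unique optimal decision $x^3$ with $\alpha = \|x^3\|_2$, yet $x^3$ is not a minimizer of $x \mapsto v(x,\gamma)$ over $X$ for any $\gamma \ge 0$. -/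
/-- Nonconvex counterexample. With `X = {x¹, x², x³} ⊆ ℝ²`,
`x¹ = (0,2)`, `x² = (1,0)`, `x³ = (1/2, 17/10)`, `p₀ = (1,0)`,
`v x γ = p₀ᵀx + γ‖x‖₂` and target `f₀ = 1/2`, the satisficing problem has unique
optimal decision `x³` with optimal value `‖x³‖₂`, yet `x³` is never a minimizer of
`v (·, γ)` over `X` for any `γ ≥ 0`. -/
theorem stmt15 :
    let p₀ : EuclideanSpace ℝ (Fin 2) := (WithLp.equiv 2 (Fin 2 → ℝ)).symm ![1, 0]
    let x : Fin 3 → EuclideanSpace ℝ (Fin 2) := fun i =>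
      (WithLp.equiv 2 (Fin 2 → ℝ)).symm (![![0, 2], ![1, 0], ![1/2, 17/10]] i)
    let v : EuclideanSpace ℝ (Fin 2) → ℝ → ℝ := fun y γ => (inner ℝ p₀ y : ℝ) + γ * ‖y‖
    IsLeast {α : ℝ | 0 ≤ α ∧ ∃ i : Fin 3, ∀ γ : ℝ, 0 ≤ γ →
        v (x i) γ ≤ 1 / 2 + α * γ} ‖x 2‖ ∧
    (∀ i : Fin 3, (∀ γ : ℝ, 0 ≤ γ → v (x i) γ ≤ 1 / 2 + ‖x 2‖ * γ) → i = 2) ∧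
    (∀ γ : ℝ, 0 ≤ γ → ∃ j : Fin 3, v (x j) γ < v (x 2) γ) := by
  intro p₀ x v
  have hx0 : ‖x 0‖ = 2 := by
    simp [x, EuclideanSpace.norm_eq, Fin.sum_univ_two]
  have hx1 : ‖x 1‖ = 1 := by
    simp [x, EuclideanSpace.norm_eq, Fin.sum_univ_two]
  have hx2sq : ‖x 2‖ ^ 2 = 157 / 50 := by
    have : ‖x 2‖ = Real.sqrt (157 / 50) := by
      simp [x, EuclideanSpace.norm_eq, Fin.sum_univ_two]
      norm_num
    rw [this, Real.sq_sqrt (by norm_num)]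
  have hx2lb : 1.7 ≤ ‖x 2‖ := by
    nlinarith [norm_nonneg (x 2)]
  have hx2ub : ‖x 2‖ ≤ 1.8 := by
    nlinarith [norm_nonneg (x 2)]
  have hi0 : (inner ℝ p₀ (x 0) : ℝ) = 0 := by
    simp [p₀, x, PiLp.inner_apply, Fin.sum_univ_two]
  have hi1 : (inner ℝ p₀ (x 1) : ℝ) = 1 := by
    simp [p₀, x, PiLp.inner_apply, Fin.sum_univ_two, EuclideanSpace.norm_eq]
  have hi2 : (inner ℝ p₀ (x 2) : ℝ) = 1 / 2 := by
    simp [p₀, x, PiLp.inner_apply, Fin.sum_univ_two]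
  refine ⟨⟨⟨norm_nonneg _, 2, fun γ hγ => ?_⟩, ?_⟩, ?_, ?_⟩
  · simp only [v, hi2]
    nlinarith
  · rintro α ⟨hα, i, hi⟩
    have hcase : i = 0 ∨ i = 1 ∨ i = 2 := by omega
    rcases hcase with rfl | rfl | rfl
    · by_contra h
      push_neg at h
      have h3 := hi 3 (by norm_num)
      simp only [v, hi0, hx0] at h3
      nlinarith
    · have h0 := hi 0 le_rfl
      simp only [v, hi1, hx1] at h0
      norm_num at h0
    · have h1 := hi 1 (by norm_num)
      simp only [v, hi2] at h1
      nlinarith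
  · intro i hi
    have hcase : i = 0 ∨ i = 1 ∨ i = 2 := by omega
    rcases hcase with rfl | rfl | rfl
    · have h3 := hi 3 (by norm_num)
      simp only [v, hi0, hx0] at h3
      nlinarith
    · have h0 := hi 0 le_rfl
      simp only [v, hi1, hx1] at h0
      norm_num at h0
    · rfl
  · intro γ hγ
    rcases le_or_gt γ 1 with h | h
    · exact ⟨0, by simp only [v, hi0, hi2, hx0]; nlinarith⟩
    · exact ⟨1, by simp only [v, hi1, hi2, hx1]; nlinarith⟩
end

section
/- Let $X = [0,2]$, $f(x,p) = (x-1)^2 + p$ for $p \in \mathbb{R}$, $p_0 = 0$, and $v(x,\gamma) = \max_{|p| \le \gamma} f(x,p) = (x-1)^2 + \gamma$. With target $f_0 = 1/4$, the satisficing problem $\min\{\alpha \ge 0 : v(x,\gamma) \le f_0 + \alpha\gamma\ \forall\gamma\ge 0,\ x \in X\}$ has optimal value $\alpha_{sat} = 1$ with optimal solution set $\{x \in [0,2] : (x-1)^2 \le 1/4\}$, whereas the robust minimizer of $v(\cdot,\gamma)$ is $x=1$ for every $\gamma \ge 0$. Hence there exist satisficing-optimal solutions that are not robustly optimal for any $\gamma$.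 -/
/-- With `X = [0,2]`, `f x p = (x-1)² + p`, `p₀ = 0`, worst-case cost
`v x γ = max_{|p| ≤ γ} f x p = (x-1)² + γ` and target `f₀ = 1/4`, the satisficing
problem has optimal value `1` with optimal solution set `{x ∈ [0,2] : (x-1)² ≤ 1/4}`,
while the robust minimizer is `x = 1` for every `γ ≥ 0`; hence there are
satisficing-optimal solutions that are not robustly optimal for any `γ`. -/
theorem stmt16 :
    let v : ℝ → ℝ → ℝ := fun x γ => (x - 1) ^ 2 + γ
    (∀ x γ : ℝ, 0 ≤ γ →
      IsGreatest {c : ℝ | ∃ p : ℝ, |p| ≤ γ ∧ c = (x - 1) ^ 2 + p} (v x γ)) ∧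
    IsLeast {α : ℝ | 0 ≤ α ∧ ∃ x ∈ Set.Icc (0 : ℝ) 2,
        ∀ γ : ℝ, 0 ≤ γ → v x γ ≤ 1 / 4 + α * γ} 1 ∧
    (∀ x ∈ Set.Icc (0 : ℝ) 2,
      ((∀ γ : ℝ, 0 ≤ γ → v x γ ≤ 1 / 4 + 1 * γ) ↔ (x - 1) ^ 2 ≤ 1 / 4)) ∧
    (∀ γ : ℝ, 0 ≤ γ → ∀ x ∈ Set.Icc (0 : ℝ) 2, v 1 γ ≤ v x γ) ∧
    (∃ x ∈ Set.Icc (0 : ℝ) 2, (x - 1) ^ 2 ≤ 1 / 4 ∧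
      ∀ γ : ℝ, 0 ≤ γ → ∃ x' ∈ Set.Icc (0 : ℝ) 2, v x' γ < v x γ) := by
  intro v
  refine ⟨?_, ⟨⟨by norm_num, 1, by norm_num, fun γ hγ => by simp only [v]; norm_num⟩, ?_⟩,
    ?_, ?_, ?_⟩
  · intro x γ hγ
    constructor
    · exact ⟨γ, by rw [abs_of_nonneg hγ], rfl⟩
    · rintro c ⟨p, hp, rfl⟩
      have := (abs_le.mp hp).2
      simp only [v]; linarith
  · rintro α ⟨hα0, x, hx, hα⟩
    by_contra h
    push_neg at h
    have h1 : (0:ℝ) < 1 - α := by linarith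
    have := hα (1 / (1 - α)) (by positivity)
    simp only [v] at this
    have hsq : 0 ≤ (x - 1) ^ 2 := sq_nonneg _
    have : (1 - α) * (1 / (1 - α)) ≤ 1 / 4 := by nlinarith
    rw [mul_one_div_cancel (ne_of_gt h1)] at this
    linarith
  · intro x hx
    constructor
    · intro h
      have := h 0 le_rfl
      simp [v] at this
      linarith
    · intro h γ hγ
      simp only [v]; linarith
  · intro γ hγ x hx
    simp only [v]
    nlinarith [sq_nonneg (x - 1)]
  · refine ⟨1/2, by norm_num, by norm_num, fun γ hγ => ⟨1, by norm_num, ?_⟩⟩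
    simp only [v]; norm_num
end

section
/- Let $\|\cdot\|$ be a norm on $\mathbb{R}^{m\times n}$ that is the operator norm induced by Euclidean norms, $A_0 \in \mathbb{R}^{m\times n}$, $b \in \mathbb{R}^m$. Then for every $x \in \mathbb{R}^n$ and $\gamma \ge 0$, $\max_{\|A - A_0\| \le \gamma} \|Ax - b\|_2 = \|A_0 x - b\|_2 + \gamma\|x\|_2$. -/
/-- Robust least squares: for the operator norm induced by Euclidean
norms (the norm of continuous linear maps between Euclidean spaces), the worst-case
residual satisfies `max_{‖A-A₀‖ ≤ γ} ‖Ax - b‖₂ = ‖A₀x - b‖₂ + γ‖x‖₂`, with the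
maximum attained. -/
theorem stmt19 {m n : ℕ} (hm : 0 < m)
    (A₀ : EuclideanSpace ℝ (Fin n) →L[ℝ] EuclideanSpace ℝ (Fin m))
    (b : EuclideanSpace ℝ (Fin m)) (x : EuclideanSpace ℝ (Fin n))
    (γ : ℝ) (hγ : 0 ≤ γ) :
    IsGreatest {c : ℝ | ∃ A : EuclideanSpace ℝ (Fin n) →L[ℝ] EuclideanSpace ℝ (Fin m),
        ‖A - A₀‖ ≤ γ ∧ c = ‖A x - b‖} (‖A₀ x - b‖ + γ * ‖x‖) := by
  constructor
  · -- attainment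
    by_cases hx : x = 0
    · refine ⟨A₀, by simp [hγ], ?_⟩
      simp [hx]
    · set r := A₀ x - b with hr
      have hxn : (0:ℝ) < ‖x‖ := norm_pos_iff.mpr hx
      -- choose unit vector u
      obtain ⟨u, hu, hru⟩ : ∃ u : EuclideanSpace ℝ (Fin m), ‖u‖ = 1 ∧
          ‖r + (γ * ‖x‖) • u‖ = ‖r‖ + γ * ‖x‖ := by
        by_cases hr0 : r = 0
        · haveI : NeZero m := ⟨hm.ne'⟩
          refine ⟨EuclideanSpace.single ⟨0, hm⟩ (1:ℝ), by simp, ?_⟩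
          rw [hr0, zero_add, norm_smul, Real.norm_eq_abs,
            abs_of_nonneg (mul_nonneg hγ (norm_nonneg x))]
          simp
        · refine ⟨‖r‖⁻¹ • r, ?_, ?_⟩
          · simp [norm_smul, abs_of_nonneg, inv_mul_cancel₀ (norm_ne_zero_iff.mpr hr0)]
          · have hrn : (0:ℝ) < ‖r‖ := norm_pos_iff.mpr hr0
            have : r + (γ * ‖x‖) • ‖r‖⁻¹ • r = (1 + γ * ‖x‖ * ‖r‖⁻¹) • r := by
              rw [add_smul, one_smul, smul_smul]
            rw [this, norm_smul]
            have h1 : (0:ℝ) ≤ 1 + γ * ‖x‖ * ‖r‖⁻¹ := by positivity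
            rw [Real.norm_eq_abs, abs_of_nonneg h1]
            field_simp
      set v : EuclideanSpace ℝ (Fin n) := ‖x‖⁻¹ • x with hv
      have hvn : ‖v‖ = 1 := by
        simp [hv, norm_smul, abs_of_nonneg, inv_mul_cancel₀ hxn.ne']
      set Δ : EuclideanSpace ℝ (Fin n) →L[ℝ] EuclideanSpace ℝ (Fin m) :=
        γ • (innerSL ℝ v).smulRight u with hΔ
      refine ⟨A₀ + Δ, ?_, ?_⟩
      · have : ‖Δ‖ ≤ γ := by
          have h2 := norm_smul γ ((innerSL ℝ v).smulRight u)
          rw [hΔ, h2, Real.norm_eq_abs, abs_of_nonneg hγ,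
            ContinuousLinearMap.norm_smulRight_apply]
          simp [hvn, hu]
        simpa using this
      · have hΔx : Δ x = (γ * ‖x‖) • u := by
          rw [hΔ]
          simp only [ContinuousLinearMap.coe_smul', Pi.smul_apply,
            ContinuousLinearMap.smulRight_apply, innerSL_apply_apply]
          have : (inner ℝ v x : ℝ) = ‖x‖ := by
            rw [hv, real_inner_smul_left, real_inner_self_eq_norm_sq]
            field_simp
          rw [this, smul_smul]
        have : (A₀ + Δ) x - b = r + (γ * ‖x‖) • u := by
          simp only [ContinuousLinearMap.add_apply, hΔx, hr]
          abel
        rw [this, hru]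
  · -- upper bound
    rintro c ⟨A, hA, rfl⟩
    have h1 : A x - b = (A₀ x - b) + (A - A₀) x := by
      simp only [ContinuousLinearMap.sub_apply]
      abel
    calc ‖A x - b‖ ≤ ‖A₀ x - b‖ + ‖(A - A₀) x‖ := by rw [h1]; exact norm_add_le _ _
      _ ≤ ‖A₀ x - b‖ + γ * ‖x‖ := by
          gcongr
          calc ‖(A - A₀) x‖ ≤ ‖A - A₀‖ * ‖x‖ := (A - A₀).le_opNorm x
            _ ≤ γ * ‖x‖ := by gcongr
end
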